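/- For every density matrix ρ on ℂ^d, M_Re(ρ) ≤ M_g(ρ), and equality M_Re(ρ) = M_g(ρ) holds if and only if ρ = ρ*, i.e. if and only if ρ is real. -/

import Mathlib

/-!
With `s = √ρ` one has `F(ρ, σ) = Tr √(s σ s)`, so for `A = s ρ s = ρ²` and `B = s ρ* s` we get
`F(ρ, ρ) = Tr √A = 1`, `F(ρ, ρ*) = Tr √B` and `F(ρ, Re ρ) = Tr √((A + B) / 2)`. The inequality is
therefore the midpoint concavity `Tr √A + Tr √B ≤ 2 Tr √((A + B) / 2)`. In an eigenbasis of
`(A + B) / 2` the right side is `∑ᵢ 2 √((αᵢ + βᵢ) / 2)`, where `αᵢ, βᵢ` are the diagonal entries of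
`A, B` in that basis, and Peierls' inequality bounds the left side by `∑ᵢ (√αᵢ + √βᵢ)`. Strict
concavity of `√` makes the inequality strict unless `αᵢ = βᵢ` for all `i`; so equality forces
`Tr ρ² = Tr A = Tr B = Tr (ρ ρ*)`, that is `‖ρ - ρ*‖₂² = 2 Tr ρ² - 2 Tr (ρ ρ*) = 0`.
-/

open Matrix Complex ComplexOrder Classical

/-- The positive semidefinite square root of a matrix (junk value `0` if not PSD). -/
noncomputable def psqrt {n : Type*} [Fintype n] [DecidableEq n] (A : Matrix n n ℂ) :
    Matrix n n ℂ :=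
  if h : A.PosSemidef then
    h.1.eigenvectorUnitary.1 * diagonal ((↑) ∘ (√·) ∘ h.1.eigenvalues) *
      (star h.1.eigenvectorUnitary : Matrix n n ℂ) else 0

/-- Entrywise complex conjugate of a matrix. -/
def mconj {m n : Type*} (A : Matrix m n ℂ) : Matrix m n ℂ := A.map (starRingEnd ℂ)

/-- Fidelity `F(ρ,σ) = Tr √(√ρ σ √ρ)`. -/
noncomputable def fidelity {n : Type*} [Fintype n] [DecidableEq n] (ρ σ : Matrix n n ℂ) : ℝ :=
  ((psqrt (psqrt ρ * σ * psqrt ρ)).trace).re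

/-- The real part state `Re(ρ) = (ρ + ρ*)/2`. -/
noncomputable def reState {n : Type*} (ρ : Matrix n n ℂ) : Matrix n n ℂ :=
  ((1 : ℂ)/2) • (ρ + mconj ρ)

/-- The imaginarity measure `M_Re(ρ) = 1 - F(ρ, Re(ρ))`. -/
noncomputable def MRe {n : Type*} [Fintype n] [DecidableEq n] (ρ : Matrix n n ℂ) : ℝ :=
  1 - fidelity ρ (reState ρ)

/-- A density matrix: positive semidefinite with trace 1. -/
def IsDensityMatrix {n : Type*} [Fintype n] (ρ : Matrix n n ℂ) : Prop :=
  ρ.PosSemidef ∧ ρ.trace = 1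

/-- The geometric imaginarity `M_g(ρ) = (1/2)(1 - F(ρ, ρ*))`. -/
noncomputable def Mg {n : Type*} [Fintype n] [DecidableEq n] (ρ : Matrix n n ℂ) : ℝ :=
  (1/2) * (1 - fidelity ρ (mconj ρ))

open scoped MatrixOrder

section SquareRoot

variable {n : Type*} [Fintype n] {A B : Matrix n n ℂ}

lemma Matrix.PosSemidef.re_diag_star_mul_mul_nonneg (hA : A.PosSemidef) (u : Matrix n n ℂ)
    (i : n) : 0 ≤ ((star u * A * u) i i).re :=
  (Complex.nonneg_iff.1 (hA.conjTranspose_mul_mul_same u).diag_nonneg).1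

variable [DecidableEq n]

lemma psqrt_eq_cfcSqrt (hA : A.PosSemidef) : psqrt A = CFC.sqrt A := by
  rw [psqrt, dif_pos hA, CFC.sqrt_eq_cfc, cfc_nnreal_eq_real _ A (nonneg_iff_posSemidef.mpr hA),
    hA.1.cfc_eq]
  simp only [IsHermitian.cfc, Unitary.conjStarAlgAut_apply]
  congr 3
  funext i
  simp [Real.coe_sqrt, Real.coe_toNNReal', hA.eigenvalues_nonneg i]

lemma re_trace_psqrt (hA : A.PosSemidef) :
    (psqrt A).trace.re = ∑ i, √(hA.1.eigenvalues i) := by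
  rw [psqrt, dif_pos hA, trace_mul_cycle, Unitary.coe_star_mul_self, one_mul, trace_diagonal]
  simp [Complex.re_sum]

lemma mul_diagonal_mul_star_apply_self (M : Matrix n n ℂ) (d : n → ℝ) (i : n) :
    (M * diagonal (RCLike.ofReal ∘ d : n → ℂ) * star M : Matrix n n ℂ) i i =
      ((∑ j, Complex.normSq (M i j) * d j : ℝ) : ℂ) := by
  rw [mul_apply, Complex.ofReal_sum]
  refine Finset.sum_congr rfl fun j _ => ?_
  simp only [mul_diagonal, star_apply, Function.comp_apply, RCLike.ofReal_eq_complex_ofReal,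
    Complex.star_def, Complex.ofReal_mul, Complex.normSq_eq_conj_mul_self]
  ring

lemma sum_normSq_apply_eq_one {M : Matrix n n ℂ} (hM : M ∈ unitaryGroup n ℂ) (i : n) :
    ∑ j, Complex.normSq (M i j) = 1 := by
  have h := mul_diagonal_mul_star_apply_self M (fun _ => 1) i
  simp only [Function.comp_def, map_one, diagonal_one, mul_one, Unitary.mul_star_self_of_mem hM,
    one_apply_eq] at h
  exact_mod_cast h.symm

lemma re_trace_eq_sum_diag {u : Matrix n n ℂ} (hu : u ∈ unitaryGroup n ℂ) :
    A.trace.re = ∑ i, ((star u * A * u) i i).re := by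
  rw [← Complex.re_sum]
  change _ = (star u * A * u).trace.re
  rw [trace_mul_cycle, Unitary.mul_star_self_of_mem hu, one_mul]

/-- Peierls' inequality for `√`: with `W` an eigenbasis of `A`, the entries `|(u⋆W)ᵢⱼ|²` form a
doubly stochastic matrix, so this is Jensen's inequality for `√` along each row. -/
lemma re_trace_psqrt_le_sum_sqrt_diag (hA : A.PosSemidef) {u : Matrix n n ℂ}
    (hu : u ∈ unitaryGroup n ℂ) :
    (psqrt A).trace.re ≤ ∑ i, √((star u * A * u) i i).re := by
  set M := star u * (hA.1.eigenvectorUnitary : Matrix n n ℂ)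
  have hM : M ∈ unitaryGroup n ℂ := mul_mem (Unitary.star_mem hu) hA.1.eigenvectorUnitary.2
  have hconj : star u * A * u = M * diagonal (RCLike.ofReal ∘ hA.1.eigenvalues) * star M := by
    conv_lhs => rw [hA.1.spectral_theorem, Unitary.conjStarAlgAut_apply]
    simp only [M, star_mul, star_star, Matrix.mul_assoc]
  have hdiag : ∀ i, ((star u * A * u) i i).re =
      ∑ j, Complex.normSq (M i j) * hA.1.eigenvalues j := fun i => by
    rw [hconj, mul_diagonal_mul_star_apply_self, Complex.ofReal_re]
  have hcol : ∀ j, ∑ i, Complex.normSq (M i j) = 1 := fun j => by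
    simpa [star_apply] using sum_normSq_apply_eq_one (Unitary.star_mem hM) j
  calc (psqrt A).trace.re = ∑ j, (∑ i, Complex.normSq (M i j)) * √(hA.1.eigenvalues j) := by
        simp [re_trace_psqrt hA, hcol]
    _ = ∑ i, ∑ j, Complex.normSq (M i j) • √(hA.1.eigenvalues j) := by
        simp only [Finset.sum_mul, smul_eq_mul]
        exact Finset.sum_comm
    _ ≤ ∑ i, √(∑ j, Complex.normSq (M i j) • hA.1.eigenvalues j) :=
        Finset.sum_le_sum fun i _ => Real.strictConcaveOn_sqrt.concaveOn.le_map_sum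
          (fun j _ => Complex.normSq_nonneg _) (sum_normSq_apply_eq_one hM i)
          (fun j _ => hA.eigenvalues_nonneg j)
    _ = ∑ i, √((star u * A * u) i i).re := by simp only [hdiag, smul_eq_mul]

lemma re_trace_psqrt_eq_sum_sqrt_diag (hA : A.PosSemidef) :
    (psqrt A).trace.re = ∑ i, √((star (hA.1.eigenvectorUnitary : Matrix n n ℂ) * A *
      hA.1.eigenvectorUnitary) i i).re := by
  have h := hA.1.conjStarAlgAut_star_eigenvectorUnitary
  rw [Unitary.conjStarAlgAut_star_apply] at h
  simp [h, re_trace_psqrt hA]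

noncomputable def sqrtGap (a b : ℝ) : ℝ := 2 * √((a + b) / 2) - (√a + √b)

lemma sqrtGap_nonneg {a b : ℝ} (ha : 0 ≤ a) (hb : 0 ≤ b) : 0 ≤ sqrtGap a b := by
  have := Real.strictConcaveOn_sqrt.concaveOn.2 (Set.mem_Ici.2 ha) (Set.mem_Ici.2 hb)
    (by norm_num : (0 : ℝ) ≤ 1 / 2) (by norm_num : (0 : ℝ) ≤ 1 / 2) (by norm_num)
  simp only [smul_eq_mul] at this
  rw [sqrtGap, show (a + b) / 2 = 1 / 2 * a + 1 / 2 * b by ring]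
  linarith

lemma sqrtGap_pos {a b : ℝ} (ha : 0 ≤ a) (hb : 0 ≤ b) (hab : a ≠ b) : 0 < sqrtGap a b := by
  have := Real.strictConcaveOn_sqrt.2 (Set.mem_Ici.2 ha) (Set.mem_Ici.2 hb) hab
    (by norm_num : (0 : ℝ) < 1 / 2) (by norm_num : (0 : ℝ) < 1 / 2) (by norm_num)
  simp only [smul_eq_mul] at this
  rw [sqrtGap, show (a + b) / 2 = 1 / 2 * a + 1 / 2 * b by ring]
  linarith

lemma exists_sum_sqrtGap_le (hA : A.PosSemidef) (hB : B.PosSemidef) :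
    ∃ u ∈ unitaryGroup n ℂ, ∑ i, sqrtGap ((star u * A * u) i i).re ((star u * B * u) i i).re ≤
      2 * (psqrt (((1 : ℂ) / 2) • (A + B))).trace.re -
        ((psqrt A).trace.re + (psqrt B).trace.re) := by
  have hC : (((1 : ℂ) / 2) • (A + B)).PosSemidef :=
    (hA.add hB).smul (Complex.nonneg_iff.2 ⟨by norm_num, by norm_num⟩)
  have hPC := re_trace_psqrt_eq_sum_sqrt_diag hC
  set u : Matrix n n ℂ := (hC.1.eigenvectorUnitary : Matrix n n ℂ)
  have hu : u ∈ unitaryGroup n ℂ := hC.1.eigenvectorUnitary.2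
  refine ⟨u, hu, ?_⟩
  have hmid : ∀ i, ((star u * (((1 : ℂ) / 2) • (A + B)) * u : Matrix n n ℂ) i i).re =
      (((star u * A * u) i i).re + ((star u * B * u) i i).re) / 2 := fun i => by
    simp only [Matrix.mul_smul, Matrix.smul_mul, Matrix.mul_add, Matrix.add_mul,
      Matrix.smul_apply, Matrix.add_apply, smul_eq_mul]
    rw [show ((1 : ℂ) / 2) = ((1 / 2 : ℝ) : ℂ) by push_cast; rfl, Complex.re_ofReal_mul,
      Complex.add_re]
    ring
  have hPA := re_trace_psqrt_le_sum_sqrt_diag hA hu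
  have hPB := re_trace_psqrt_le_sum_sqrt_diag hB hu
  simp only [hmid] at hPC
  simp only [sqrtGap, Finset.sum_sub_distrib, Finset.sum_add_distrib, ← Finset.mul_sum]
  linarith

lemma re_trace_psqrt_add_le (hA : A.PosSemidef) (hB : B.PosSemidef) :
    (psqrt A).trace.re + (psqrt B).trace.re ≤ 2 * (psqrt (((1 : ℂ) / 2) • (A + B))).trace.re := by
  obtain ⟨u, hu, hgap⟩ := exists_sum_sqrtGap_le hA hB
  have := Finset.sum_nonneg fun i (_ : i ∈ Finset.univ) =>
    sqrtGap_nonneg (hA.re_diag_star_mul_mul_nonneg u i) (hB.re_diag_star_mul_mul_nonneg u i)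
  linarith

lemma re_trace_psqrt_add_lt (hA : A.PosSemidef) (hB : B.PosSemidef)
    (hAB : A.trace.re ≠ B.trace.re) :
    (psqrt A).trace.re + (psqrt B).trace.re < 2 * (psqrt (((1 : ℂ) / 2) • (A + B))).trace.re := by
  obtain ⟨u, hu, hgap⟩ := exists_sum_sqrtGap_le hA hB
  obtain ⟨i, -, hi⟩ :
      ∃ i ∈ Finset.univ, ((star u * A * u) i i).re ≠ ((star u * B * u) i i).re := by
    by_contra! h
    rw [re_trace_eq_sum_diag hu, re_trace_eq_sum_diag (A := B) hu] at hAB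
    exact hAB (Finset.sum_congr rfl h)
  have hpos : 0 < ∑ j, sqrtGap ((star u * A * u) j j).re ((star u * B * u) j j).re :=
    Finset.sum_pos' (fun j _ => sqrtGap_nonneg (hA.re_diag_star_mul_mul_nonneg u j)
        (hB.re_diag_star_mul_mul_nonneg u j))
      ⟨i, Finset.mem_univ i,
        sqrtGap_pos (hA.re_diag_star_mul_mul_nonneg u i) (hB.re_diag_star_mul_mul_nonneg u i) hi⟩
  linarith

end SquareRoot

section Fidelity

variable {n : Type*} [Fintype n] [DecidableEq n] {ρ σ τ : Matrix n n ℂ}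

lemma Matrix.PosSemidef.psqrt_mul_psqrt (hρ : ρ.PosSemidef) : psqrt ρ * psqrt ρ = ρ := by
  rw [psqrt_eq_cfcSqrt hρ, CFC.sqrt_mul_sqrt_self ρ (nonneg_iff_posSemidef.2 hρ)]

lemma Matrix.PosSemidef.psqrt_mul_mul_psqrt (hρ : ρ.PosSemidef) (hσ : σ.PosSemidef) :
    (psqrt ρ * σ * psqrt ρ).PosSemidef := by
  have hs : (psqrt ρ).IsHermitian := by
    rw [psqrt_eq_cfcSqrt hρ]
    exact (nonneg_iff_posSemidef.1 (CFC.sqrt_nonneg ρ)).1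
  simpa [hs.eq] using hσ.conjTranspose_mul_mul_same (psqrt ρ)

lemma trace_psqrt_mul_mul_psqrt (hρ : ρ.PosSemidef) (σ : Matrix n n ℂ) :
    (psqrt ρ * σ * psqrt ρ).trace = (ρ * σ).trace := by
  rw [trace_mul_cycle, hρ.psqrt_mul_psqrt]

lemma fidelity_self (hρ : ρ.PosSemidef) : fidelity ρ ρ = ρ.trace.re := by
  have hsq : psqrt ρ * ρ * psqrt ρ = ρ ^ 2 := calc
    _ = psqrt ρ * (psqrt ρ * psqrt ρ) * psqrt ρ := by rw [hρ.psqrt_mul_psqrt]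
    _ = (psqrt ρ * psqrt ρ) * (psqrt ρ * psqrt ρ) := by simp only [Matrix.mul_assoc]
    _ = ρ ^ 2 := by rw [hρ.psqrt_mul_psqrt, sq]
  rw [fidelity, psqrt_eq_cfcSqrt (hρ.psqrt_mul_mul_psqrt hρ), hsq,
    CFC.sqrt_sq ρ (nonneg_iff_posSemidef.2 hρ)]

lemma psqrt_mul_midpoint_mul_psqrt (ρ σ τ : Matrix n n ℂ) :
    psqrt ρ * (((1 : ℂ) / 2) • (σ + τ)) * psqrt ρ =
      ((1 : ℂ) / 2) • (psqrt ρ * σ * psqrt ρ + psqrt ρ * τ * psqrt ρ) := by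
  simp only [Matrix.mul_smul, Matrix.smul_mul, Matrix.mul_add, Matrix.add_mul]

lemma fidelity_add_le (hρ : ρ.PosSemidef) (hσ : σ.PosSemidef) (hτ : τ.PosSemidef) :
    fidelity ρ σ + fidelity ρ τ ≤ 2 * fidelity ρ (((1 : ℂ) / 2) • (σ + τ)) := by
  rw [fidelity, fidelity, fidelity, psqrt_mul_midpoint_mul_psqrt]
  exact re_trace_psqrt_add_le (hρ.psqrt_mul_mul_psqrt hσ) (hρ.psqrt_mul_mul_psqrt hτ)

lemma fidelity_add_lt (hρ : ρ.PosSemidef) (hσ : σ.PosSemidef) (hτ : τ.PosSemidef)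
    (hστ : (ρ * σ).trace.re ≠ (ρ * τ).trace.re) :
    fidelity ρ σ + fidelity ρ τ < 2 * fidelity ρ (((1 : ℂ) / 2) • (σ + τ)) := by
  rw [fidelity, fidelity, fidelity, psqrt_mul_midpoint_mul_psqrt]
  refine re_trace_psqrt_add_lt (hρ.psqrt_mul_mul_psqrt hσ) (hρ.psqrt_mul_mul_psqrt hτ) ?_
  rwa [trace_psqrt_mul_mul_psqrt hρ, trace_psqrt_mul_mul_psqrt hρ]

end Fidelity

lemma mconj_eq_conjTranspose_transpose {n : Type*} (A : Matrix n n ℂ) : mconj A = Aᴴᵀ := rfl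

lemma Matrix.PosSemidef.mconj {n : Type*} [Fintype n] {ρ : Matrix n n ℂ} (hρ : ρ.PosSemidef) :
    (mconj ρ).PosSemidef := by
  rw [mconj_eq_conjTranspose_transpose, hρ.1.eq]
  exact hρ.transpose

lemma Matrix.IsHermitian.eq_mconj_of_re_trace_mul_eq {n : Type*} [Fintype n] {ρ : Matrix n n ℂ}
    (hρ : ρ.IsHermitian) (h : (ρ * ρ).trace.re = (ρ * mconj ρ).trace.re) : ρ = mconj ρ := by
  rw [mconj_eq_conjTranspose_transpose, hρ.eq] at h ⊢
  set D := ρ - ρᵀ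
  have hD : Dᴴ = D := by simp [D, hρ.eq, hρ.transpose.eq]
  have htr : (Dᴴ * D).trace = 2 * ((ρ * ρ).trace - (ρ * ρᵀ).trace) := by
    rw [hD]
    simp only [D, Matrix.sub_mul, Matrix.mul_sub, trace_sub, ← transpose_mul, trace_transpose,
      trace_mul_comm ρᵀ ρ]
    ring
  have hnonneg := Complex.nonneg_iff.1 (posSemidef_conjTranspose_mul_self D).trace_nonneg
  have hzero : (Dᴴ * D).trace = 0 := by
    refine Complex.ext ?_ hnonneg.2.symm
    simp [htr, h]
  exact sub_eq_zero.1 (trace_conjTranspose_mul_self_eq_zero_iff.1 hzero)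

theorem stmt7 (d : ℕ) (ρ : Matrix (Fin d) (Fin d) ℂ) (hρ : IsDensityMatrix ρ) :
    MRe ρ ≤ Mg ρ ∧ (MRe ρ = Mg ρ ↔ ρ = mconj ρ) := by
  obtain ⟨hpsd, htr⟩ := hρ
  have hself : fidelity ρ ρ = 1 := by rw [fidelity_self hpsd, htr, Complex.one_re]
  have hle := fidelity_add_le hpsd hpsd hpsd.mconj
  unfold MRe Mg reState
  refine ⟨by linarith, fun heq => hpsd.1.eq_mconj_of_re_trace_mul_eq ?_, fun heq => ?_⟩
  · by_contra hne
    linarith [fidelity_add_lt hpsd hpsd hpsd.mconj hne]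
  · rw [← heq, ← two_smul ℂ ρ, smul_smul]
    norm_num [hself]
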